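/- For every n ≥ 1, every tuning parameter η_n > 0 and every δ with 0 < δ < 1: the equation Φ(n^{1/2}(a − η_n)) − Φ(−n^{1/2} sqrt(a² + η_n²)) = δ has a unique solution a_{n,A}* in [0, ∞), this solution is positive, the interval [θ̂_A − a_{n,A}*, θ̂_A + a_{n,A}*] has infimal coverage probability inf_{θ∈ℝ} P_{n,θ}(θ ∈ [θ̂_A − a_{n,A}*, θ̂_A + a_{n,A}*]) exactly equal to δ, and among all pairs (a, b) of nonnegative reals for which inf_{θ∈ℝ} P_{n,θ}(θ ∈ [θ̂_A − a, θ̂_A + b]) ≥ δ the length a + b is uniquely minimized at a = b = a_{n,A}*. -/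

import Mathlib

open MeasureTheory ProbabilityTheory Filter
open scoped NNReal

/-- Standard normal cumulative distribution function Φ. -/
noncomputable def stdNormCDF (x : ℝ) : ℝ :=
  ((gaussianReal 0 1) (Set.Iic x)).toReal

/-- Soft-thresholding (LASSO) estimator with threshold η, as a function of ȳ. -/
noncomputable def softThresh (η y : ℝ) : ℝ := Real.sign y * max (|y| - η) 0

/-- Hard-thresholding estimator with threshold η, as a function of ȳ. -/
noncomputable def hardThresh (η y : ℝ) : ℝ := if η < |y| then y else 0

/-- Adaptive LASSO estimator with tuning parameter η, as a function of ȳ. -/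
noncomputable def adaLasso (η y : ℝ) : ℝ := if |y| ≤ η then 0 else y - η ^ 2 / y

/-- Coverage probability `P_{n,θ}(θ ∈ [est(ȳ) - a, est(ȳ) + b])` in the
known-variance case (σ = 1), where ȳ ~ N(θ, 1/n). -/
noncomputable def cover (n : ℕ) (est : ℝ → ℝ) (a b θ : ℝ) : ℝ :=
  ((gaussianReal θ ((n : ℝ≥0))⁻¹)
    {y : ℝ | est y - a ≤ θ ∧ θ ≤ est y + b}).toReal

/-!
For `|ȳ| > η` the adaptive LASSO is inverted by `r z = adaLassoInv η z`, the positive root of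
`y ^ 2 - z y - η ^ 2` (and by `-r (-z)` on the negative branch). So for `θ > b` the coverage of
`[θ̂ - a, θ̂ + b]` is the standard normal mass of `[√n (r (θ - b) - θ), √n (r (θ + a) - θ)]`.

For `a = b` this mass increases with `θ > a`: the lower endpoint is nearer to the origin and, `r`
being convex, moves at least as fast as the upper one. Together with a direct bound on `|θ| ≤ a`
and the symmetry `θ ↦ -θ`, the infimum is the limit as `θ ↓ a`, namely
`Φ(√n √(a² + η²)) - Φ(√n (η - a))`, which increases strictly from `0` to `1` on `[0, ∞)`.

For `b < a` and `m = (a + b) / 2`, the limit as `θ ↓ b` arises from that infimum at half-length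
`m` by moving a window of length `√n (m - b)` from inside `[-√n √(m² + η²), √n √(m² + η²)]` to
just beyond its right end, which strictly loses mass. Hence an interval of level `δ` has
`(a + b) / 2 ≥ a*`, with equality only for `a = b = a*`.
-/

open Set Topology

local notation "φ" => gaussianPDFReal 0 1

lemma gaussianPDFReal_lt_iff {x y : ℝ} : φ y < φ x ↔ |x| < |y| := by
  simp only [gaussianPDFReal_def, NNReal.coe_one, mul_one, sub_zero]
  rw [mul_lt_mul_iff_right₀ (by positivity), Real.exp_lt_exp, ← sq_lt_sq]
  constructor <;> intro h <;> linarith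

lemma gaussianPDFReal_le_iff {x y : ℝ} : φ y ≤ φ x ↔ |x| ≤ |y| := by
  rw [← not_lt, ← not_lt, gaussianPDFReal_lt_iff]

lemma stdNormCDF_eq_cdf : stdNormCDF = cdf (gaussianReal 0 1) :=
  funext fun x => (cdf_eq_real _ x).symm

lemma hasDerivAt_stdNormCDF (x : ℝ) : HasDerivAt stdNormCDF (φ x) x := by
  have hcont : Continuous φ := by simp only [gaussianPDFReal_def]; fun_prop
  have hint : Integrable φ := integrable_gaussianPDFReal 0 1
  have h : ∀ y, stdNormCDF y = stdNormCDF 0 + ∫ t in (0 : ℝ)..y, φ t := by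
    intro y
    simp only [stdNormCDF, gaussianReal_apply_eq_integral 0 one_ne_zero,
      ENNReal.toReal_ofReal (setIntegral_nonneg measurableSet_Iic
        fun t _ => gaussianPDFReal_nonneg 0 1 t)]
    rw [← intervalIntegral.integral_Iic_sub_Iic hint.integrableOn hint.integrableOn]
    ring
  rw [show stdNormCDF = _ from funext h]
  exact (hcont.integral_hasStrictDerivAt 0 x).hasDerivAt.const_add _

lemma strictMono_stdNormCDF : StrictMono stdNormCDF :=
  strictMono_of_deriv_pos fun x =>
    (hasDerivAt_stdNormCDF x).deriv ▸ gaussianPDFReal_pos 0 1 x one_ne_zero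

lemma continuous_stdNormCDF : Continuous stdNormCDF :=
  continuous_iff_continuousAt.2 fun x => (hasDerivAt_stdNormCDF x).continuousAt

lemma tendsto_stdNormCDF_atTop : Tendsto stdNormCDF atTop (𝓝 1) :=
  stdNormCDF_eq_cdf ▸ tendsto_cdf_atTop _

lemma tendsto_stdNormCDF_atBot : Tendsto stdNormCDF atBot (𝓝 0) :=
  stdNormCDF_eq_cdf ▸ tendsto_cdf_atBot _

lemma stdNormCDF_neg (x : ℝ) : stdNormCDF (-x) = 1 - stdNormCDF x := by
  have hsymm := (gaussianReal_map_neg (μ := 0) (v := 1)).symm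
  rw [neg_zero] at hsymm
  have := nullSingletonClass_gaussianReal (μ := 0) one_ne_zero
  rw [stdNormCDF, hsymm, Measure.map_apply measurable_neg measurableSet_Iic,
    show (fun y : ℝ => -y) ⁻¹' Iic (-x) = (Iio x)ᶜ by ext; simp,
    prob_compl_eq_one_sub measurableSet_Iio, measure_congr Iio_ae_eq_Iic,
    ENNReal.toReal_sub_of_le prob_le_one ENNReal.one_ne_top, ENNReal.toReal_one, stdNormCDF]

lemma gaussianReal_zero_one_Icc_toReal {p q : ℝ} (h : p ≤ q) :
    ((gaussianReal 0 1) (Icc p q)).toReal = stdNormCDF q - stdNormCDF p := by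
  have := nullSingletonClass_gaussianReal (μ := 0) one_ne_zero
  rw [← measure_congr Ioc_ae_eq_Icc, ← measure_cdf (gaussianReal 0 1),
    StieltjesFunction.measure_Ioc, ENNReal.toReal_ofReal (sub_nonneg.2 (monotone_cdf _ h)),
    stdNormCDF_eq_cdf]

lemma gaussianReal_Icc_toReal {n : ℕ} (hn : 0 < n) (θ : ℝ) {L U : ℝ} (h : L ≤ U) :
    ((gaussianReal θ (n : ℝ≥0)⁻¹) (Icc L U)).toReal
      = stdNormCDF (√n * (U - θ)) - stdNormCDF (√n * (L - θ)) := by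
  have hc : 0 < √(n : ℝ) := by positivity
  have hstd :
      ((gaussianReal θ (n : ℝ≥0)⁻¹).map (· - θ)).map (√n * ·) = gaussianReal 0 1 := by
    rw [gaussianReal_map_sub_const, gaussianReal_map_const_mul, sub_self, mul_zero]
    congr 1
    ext
    simp [hn.ne']
  rw [← gaussianReal_zero_one_Icc_toReal (by gcongr), ← hstd,
    Measure.map_apply (by fun_prop) measurableSet_Icc,
    Measure.map_apply (by fun_prop) (measurableSet_Icc.preimage (by fun_prop))]
  congr 2
  ext y
  simp [mul_le_mul_iff_right₀ hc]

lemma stdNormCDF_add_sub_lt {S p t : ℝ} (hp : |p| ≤ S) (hpt : |p + t| ≤ S) (ht : 0 < t) :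
    stdNormCDF (S + t) - stdNormCDF S < stdNormCDF (p + t) - stdNormCDF p := by
  set g := fun s => stdNormCDF (p + s) - stdNormCDF (S + s)
  have hg (s : ℝ) : HasDerivAt g (φ (p + s) - φ (S + s)) s :=
    ((hasDerivAt_stdNormCDF _).comp_const_add p s).sub
      ((hasDerivAt_stdNormCDF _).comp_const_add S s)
  have hmono : StrictMonoOn g (Icc 0 t) := by
    refine strictMonoOn_of_deriv_pos (convex_Icc 0 t)
      (fun s _ => (hg s).continuousAt.continuousWithinAt) fun s hs => ?_
    rw [interior_Icc] at hs
    have hps : |p + s| ≤ S := by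
      rw [abs_le] at hp hpt ⊢
      constructor <;> linarith [hs.1, hs.2]
    rw [(hg s).deriv, sub_pos, gaussianPDFReal_lt_iff,
      abs_of_pos (a := S + s) (by linarith [abs_nonneg p, hs.1])]
    linarith [hs.1]
  have := hmono ⟨le_rfl, ht.le⟩ ⟨ht.le, le_rfl⟩ ht
  simp only [g, add_zero] at this
  linarith

/-- The inverse of `y ↦ y - η ^ 2 / y` on `(0, ∞)`, i.e. the positive root of
`y ^ 2 - z * y - η ^ 2`. -/
noncomputable def adaLassoInv (η z : ℝ) : ℝ := (z + √(z ^ 2 + 4 * η ^ 2)) / 2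

section adaLassoInv

variable {η : ℝ}

lemma adaLassoInv_pos (hη : 0 < η) (z : ℝ) : 0 < adaLassoInv η z := by
  have : |z| < √(z ^ 2 + 4 * η ^ 2) := by
    rw [← Real.sqrt_sq_eq_abs]
    exact Real.sqrt_lt_sqrt (sq_nonneg z) (lt_add_of_pos_right _ (by positivity))
  unfold adaLassoInv
  linarith [neg_abs_le z]

lemma adaLassoInv_sub_div (hη : 0 < η) (z : ℝ) :
    adaLassoInv η z - η ^ 2 / adaLassoInv η z = z := by
  have hr := adaLassoInv_pos hη z
  have hs := Real.sq_sqrt (by positivity : 0 ≤ z ^ 2 + 4 * η ^ 2)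
  rw [sub_eq_iff_eq_add, ← sub_eq_iff_eq_add', eq_div_iff hr.ne']
  unfold adaLassoInv
  nlinarith

lemma lt_adaLassoInv (hη : 0 < η) (z : ℝ) : z < adaLassoInv η z := by
  have := adaLassoInv_sub_div hη z
  have : 0 < η ^ 2 / adaLassoInv η z := by have := adaLassoInv_pos hη z; positivity
  linarith

lemma adaLassoInv_sub_div_self {y : ℝ} (hy : 0 < y) : adaLassoInv η (y - η ^ 2 / y) = y := by
  have : (y - η ^ 2 / y) ^ 2 + 4 * η ^ 2 = (y + η ^ 2 / y) ^ 2 := by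
    field_simp
    ring
  rw [adaLassoInv, this, Real.sqrt_sq (by positivity)]
  ring

lemma adaLassoInv_zero (hη : 0 ≤ η) : adaLassoInv η 0 = η := by
  rw [adaLassoInv, show (0 : ℝ) ^ 2 + 4 * η ^ 2 = (2 * η) ^ 2 by ring,
    Real.sqrt_sq (by positivity)]
  ring

lemma adaLassoInv_two_mul (a : ℝ) : adaLassoInv η (2 * a) = a + √(a ^ 2 + η ^ 2) := by
  rw [adaLassoInv, show (2 * a) ^ 2 + 4 * η ^ 2 = 2 ^ 2 * (a ^ 2 + η ^ 2) by ring,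
    Real.sqrt_mul' _ (by positivity), Real.sqrt_sq zero_le_two]
  ring

lemma hasDerivAt_adaLassoInv (hη : 0 < η) (z : ℝ) :
    HasDerivAt (adaLassoInv η) (1 + η ^ 2 / adaLassoInv η z ^ 2)⁻¹ z := by
  have hr := (adaLassoInv_pos hη z).ne'
  have hf : HasDerivAt (fun y => y - η ^ 2 / y) (1 + η ^ 2 / adaLassoInv η z ^ 2)
      (adaLassoInv η z) := by
    simp only [div_eq_mul_inv]
    exact ((hasDerivAt_id' _).fun_sub ((hasDerivAt_inv hr).const_mul _)).congr_deriv (by ring)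
  exact hf.of_local_left_inverse (by unfold adaLassoInv; fun_prop) (by positivity)
    (.of_forall (adaLassoInv_sub_div hη))

lemma strictMono_adaLassoInv (hη : 0 < η) : StrictMono (adaLassoInv η) :=
  strictMono_of_deriv_pos fun z => (hasDerivAt_adaLassoInv hη z).deriv ▸ by positivity

lemma antitone_adaLassoInv_sub (hη : 0 < η) : Antitone fun z => adaLassoInv η z - z := by
  have hd (z : ℝ) := (hasDerivAt_adaLassoInv hη z).fun_sub (hasDerivAt_id' z)
  refine antitone_of_deriv_nonpos (fun z => (hd z).differentiableAt) fun z => ?_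
  rw [(hd z).deriv, sub_nonpos]
  exact inv_le_one_of_one_le₀ (le_add_of_nonneg_right (by positivity))

end adaLassoInv

lemma adaLasso_neg (η y : ℝ) : adaLasso η (-y) = -adaLasso η y := by
  unfold adaLasso
  rw [abs_neg]
  split_ifs <;> ring

section adaLasso

variable {η : ℝ}

lemma sub_sq_div_neg_of_lt_neg (hη : 0 < η) {y : ℝ} (hy : y < -η) : y - η ^ 2 / y < 0 := by
  have hy0 : y < 0 := by linarith
  have : y < η ^ 2 / y := (lt_div_iff_of_neg hy0).2 (by nlinarith)
  linarith

lemma adaLasso_le_iff_of_nonneg (hη : 0 < η) {u : ℝ} (hu : 0 ≤ u) (y : ℝ) :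
    adaLasso η y ≤ u ↔ y ≤ adaLassoInv η u := by
  have hηu : η ≤ adaLassoInv η u := by
    simpa only [adaLassoInv_zero hη.le] using (strictMono_adaLassoInv hη).monotone hu
  unfold adaLasso
  split_ifs with hy
  · exact iff_of_true hu ((le_abs_self y).trans (hy.trans hηu))
  rcases lt_abs.1 (not_le.1 hy) with hy | hy
  · conv_rhs => rw [← adaLassoInv_sub_div_self (η := η) (by linarith : 0 < y)]
    exact (strictMono_adaLassoInv hη).le_iff_le.symm
  · exact iff_of_true (by linarith [sub_sq_div_neg_of_lt_neg hη (by linarith : y < -η)])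
      (by linarith [adaLassoInv_pos hη u])

lemma le_adaLasso_iff_of_pos (hη : 0 < η) {l : ℝ} (hl : 0 < l) (y : ℝ) :
    l ≤ adaLasso η y ↔ adaLassoInv η l ≤ y := by
  have hηl : η < adaLassoInv η l := by
    simpa only [adaLassoInv_zero hη.le] using strictMono_adaLassoInv hη hl
  unfold adaLasso
  split_ifs with hy
  · exact iff_of_false hl.not_ge ((le_abs_self y).trans hy |>.trans_lt hηl).not_ge
  rcases lt_abs.1 (not_le.1 hy) with hy | hy
  · conv_rhs => rw [← adaLassoInv_sub_div_self (η := η) (by linarith : 0 < y)]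
    exact (strictMono_adaLassoInv hη).le_iff_le.symm
  · exact iff_of_false (by linarith [sub_sq_div_neg_of_lt_neg hη (by linarith : y < -η)])
      (by linarith [adaLassoInv_pos hη l])

lemma le_adaLasso_iff_of_nonpos (hη : 0 < η) {l : ℝ} (hl : l ≤ 0) (y : ℝ) :
    l ≤ adaLasso η y ↔ -adaLassoInv η (-l) ≤ y := by
  rw [neg_le, ← adaLasso_le_iff_of_nonneg hη (neg_nonneg.2 hl), adaLasso_neg, neg_le_neg_iff]

end adaLasso

section cover

variable {n : ℕ} {est : ℝ → ℝ} {a b θ : ℝ}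

lemma cover_eq_of_iff (hn : 0 < n) {L U : ℝ} (hL : ∀ y, θ - b ≤ est y ↔ L ≤ y)
    (hU : ∀ y, est y ≤ θ + a ↔ y ≤ U) (hLU : L ≤ U) :
    cover n est a b θ = stdNormCDF (√n * (U - θ)) - stdNormCDF (√n * (L - θ)) := by
  rw [cover, ← gaussianReal_Icc_toReal hn θ hLU]
  congr 2
  ext y
  simp only [mem_ofPred_eq, mem_Icc, sub_le_iff_le_add, ← hU, ← hL, and_comm]

lemma cover_neg (hest : ∀ y, est (-y) = -est y) (n : ℕ) (a b θ : ℝ) :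
    cover n est a b (-θ) = cover n est b a θ := by
  rw [cover, ← neg_neg θ, ← gaussianReal_map_neg, neg_neg,
    show (fun y : ℝ => -y) = MeasurableEquiv.neg ℝ from rfl, MeasurableEquiv.map_apply, cover]
  congr 2
  ext y
  simp only [mem_preimage, mem_ofPred_eq, MeasurableEquiv.neg_apply, hest]
  constructor <;> rintro ⟨h₁, h₂⟩ <;> constructor <;> linarith

lemma iInf_cover_comm (hest : ∀ y, est (-y) = -est y) (n : ℕ) (a b : ℝ) :
    ⨅ θ, cover n est a b θ = ⨅ θ, cover n est b a θ := by
  rw [← (Equiv.neg ℝ).iInf_comp]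
  simp only [Equiv.neg_apply, cover_neg hest]

lemma bddBelow_range_cover (n : ℕ) (est : ℝ → ℝ) (a b : ℝ) :
    BddBelow (range (cover n est a b)) :=
  ⟨0, by rintro _ ⟨θ, rfl⟩; exact ENNReal.toReal_nonneg⟩

end cover

noncomputable def symmInfCoverage (n : ℕ) (η a : ℝ) : ℝ :=
  stdNormCDF (√n * √(a ^ 2 + η ^ 2)) - stdNormCDF (√n * (η - a))

section symmInfCoverage

variable {n : ℕ} {η : ℝ}

lemma stdNormCDF_sub_eq_symmInfCoverage (n : ℕ) (η a : ℝ) :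
    stdNormCDF (√n * (a - η)) - stdNormCDF (-(√n * √(a ^ 2 + η ^ 2)))
      = symmInfCoverage n η a := by
  rw [symmInfCoverage, stdNormCDF_neg, show √n * (a - η) = -(√n * (η - a)) by ring,
    stdNormCDF_neg]
  ring

lemma symmInfCoverage_zero (hη : 0 ≤ η) : symmInfCoverage n η 0 = 0 := by
  simp [symmInfCoverage, Real.sqrt_sq hη]

lemma continuous_symmInfCoverage (n : ℕ) (η : ℝ) : Continuous (symmInfCoverage n η) :=
  (continuous_stdNormCDF.comp (by fun_prop)).sub (continuous_stdNormCDF.comp (by fun_prop))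

lemma strictMonoOn_symmInfCoverage (hn : 0 < n) (η : ℝ) :
    StrictMonoOn (symmInfCoverage n η) (Ici 0) := by
  intro a ha b _ hab
  have hc : 0 < √(n : ℝ) := by positivity
  have hS : √(a ^ 2 + η ^ 2) < √(b ^ 2 + η ^ 2) :=
    Real.sqrt_lt_sqrt (by positivity) (by nlinarith [mem_Ici.1 ha])
  have h₁ := strictMono_stdNormCDF (mul_lt_mul_of_pos_left hS hc)
  have h₂ := strictMono_stdNormCDF (mul_lt_mul_of_pos_left (by linarith : η - b < η - a) hc)
  unfold symmInfCoverage
  linarith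

lemma tendsto_symmInfCoverage_atTop (hn : 0 < n) (η : ℝ) :
    Tendsto (symmInfCoverage n η) atTop (𝓝 1) := by
  have hc : 0 < √(n : ℝ) := by positivity
  have h₁ : Tendsto (fun a => √n * √(a ^ 2 + η ^ 2)) atTop atTop :=
    (tendsto_atTop_mono (fun a => Real.le_sqrt_of_sq_le (le_add_of_nonneg_right (sq_nonneg η)))
      tendsto_id).const_mul_atTop hc
  have h₂ : Tendsto (fun a => √n * (η - a)) atTop atBot :=
    (tendsto_atBot_add_const_left _ η tendsto_neg_atTop_atBot).const_mul_atBot hc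
  have := (tendsto_stdNormCDF_atTop.comp h₁).sub (tendsto_stdNormCDF_atBot.comp h₂)
  rwa [sub_zero] at this

lemma exists_symmInfCoverage_eq (hn : 0 < n) (hη : 0 < η) {δ : ℝ} (hδ₀ : 0 < δ)
    (hδ₁ : δ < 1) : ∃ a₀, 0 < a₀ ∧ symmInfCoverage n η a₀ = δ ∧
      ∀ a, 0 ≤ a → symmInfCoverage n η a = δ → a = a₀ := by
  obtain ⟨M, hM, hM₀⟩ := ((tendsto_symmInfCoverage_atTop hn η).eventually
    (eventually_gt_nhds hδ₁) |>.and (eventually_ge_atTop 0)).exists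
  obtain ⟨a₀, ⟨ha₀, -⟩, hfa₀⟩ := intermediate_value_Icc hM₀
    (continuous_symmInfCoverage n η).continuousOn
    ⟨(symmInfCoverage_zero hη.le).symm ▸ hδ₀.le, hM.le⟩
  refine ⟨a₀, ha₀.lt_of_ne ?_, hfa₀, fun a ha h =>
    (strictMonoOn_symmInfCoverage hn η).injOn ha ha₀ (h.trans hfa₀.symm)⟩
  rintro rfl
  rw [symmInfCoverage_zero hη.le] at hfa₀
  exact hδ₀.ne hfa₀

end symmInfCoverage

noncomputable def coverRight (n : ℕ) (η a b θ : ℝ) : ℝ :=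
  stdNormCDF (√n * (adaLassoInv η (θ + a) - θ))
    - stdNormCDF (√n * (adaLassoInv η (θ - b) - θ))

section adaLassoCover

variable {n : ℕ} {η a b θ : ℝ}

lemma cover_adaLasso_of_lt (hn : 0 < n) (hη : 0 < η) (ha : 0 ≤ a) (hb : 0 ≤ b)
    (hθ : b < θ) : cover n (adaLasso η) a b θ = coverRight n η a b θ :=
  cover_eq_of_iff hn (le_adaLasso_iff_of_pos hη (sub_pos.2 hθ))
    (adaLasso_le_iff_of_nonneg hη (by linarith))
    ((strictMono_adaLassoInv hη).monotone (by linarith))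

lemma cover_adaLasso_of_abs_le (hn : 0 < n) (hη : 0 < η) (hθ : |θ| ≤ a) :
    cover n (adaLasso η) a a θ = stdNormCDF (√n * (adaLassoInv η (θ + a) - θ))
      - stdNormCDF (√n * (-adaLassoInv η (a - θ) - θ)) := by
  obtain ⟨h₁, h₂⟩ := abs_le.1 hθ
  have hL := le_adaLasso_iff_of_nonpos hη (by linarith : θ - a ≤ 0)
  rw [neg_sub] at hL
  refine cover_eq_of_iff hn hL (adaLasso_le_iff_of_nonneg hη (by linarith)) ?_
  linarith [adaLassoInv_pos hη (a - θ), adaLassoInv_pos hη (θ + a)]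

lemma continuous_coverRight (n : ℕ) (η a b : ℝ) : Continuous (coverRight n η a b) := by
  unfold coverRight adaLassoInv
  exact (continuous_stdNormCDF.comp (by fun_prop)).sub (continuous_stdNormCDF.comp (by fun_prop))

lemma coverRight_self (hη : 0 ≤ η) : coverRight n η a b b
    = stdNormCDF (√n * (adaLassoInv η (a + b) - b)) - stdNormCDF (√n * (η - b)) := by
  rw [coverRight, sub_self, adaLassoInv_zero hη, add_comm b]

lemma coverRight_self_self (hη : 0 ≤ η) : coverRight n η a a a = symmInfCoverage n η a := by
  rw [coverRight_self hη, ← two_mul, adaLassoInv_two_mul, add_sub_cancel_left, symmInfCoverage]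

lemma iInf_cover_le_coverRight (hn : 0 < n) (hη : 0 < η) (ha : 0 ≤ a) (hb : 0 ≤ b) :
    ⨅ θ, cover n (adaLasso η) a b θ ≤ coverRight n η a b b :=
  ge_of_tendsto ((continuous_coverRight n η a b).tendsto b |>.mono_left nhdsWithin_le_nhds)
    (eventually_nhdsWithin_of_forall (s := Ioi b) fun θ hθ =>
      cover_adaLasso_of_lt hn hη ha hb hθ ▸ ciInf_le (bddBelow_range_cover _ _ a b) θ)

lemma monotoneOn_coverRight (hη : 0 < η) (ha : 0 ≤ a) :
    MonotoneOn (coverRight n η a a) (Ici a) := by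
  set D := fun z => (1 + η ^ 2 / adaLassoInv η z ^ 2)⁻¹
  have hr (z : ℝ) := hasDerivAt_adaLassoInv hη z
  have hF (θ : ℝ) : HasDerivAt (coverRight n η a a)
      (φ (√n * (adaLassoInv η (θ + a) - θ)) * (√n * (D (θ + a) - 1))
        - φ (√n * (adaLassoInv η (θ - a) - θ)) * (√n * (D (θ - a) - 1))) θ :=
    ((hasDerivAt_stdNormCDF _).comp θ
        ((((hr _).comp_add_const θ a).fun_sub (hasDerivAt_id' θ)).const_mul _)).fun_sub
      ((hasDerivAt_stdNormCDF _).comp θ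
        ((((hr _).comp_sub_const θ a).fun_sub (hasDerivAt_id' θ)).const_mul _))
  refine monotoneOn_of_deriv_nonneg (convex_Ici a)
    (continuous_coverRight n η a a).continuousOn
    (fun θ _ => (hF θ).differentiableAt.differentiableWithinAt) fun θ hθ => ?_
  rw [interior_Ici, mem_Ioi] at hθ
  have hmono : adaLassoInv η (θ - a) ≤ adaLassoInv η (θ + a) :=
    (strictMono_adaLassoInv hη).monotone (by linarith)
  have hφ :
      φ (√n * (adaLassoInv η (θ + a) - θ)) ≤ φ (√n * (adaLassoInv η (θ - a) - θ)) := by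
    rw [gaussianPDFReal_le_iff, abs_mul, abs_mul]
    refine mul_le_mul_of_nonneg_left (abs_le_abs (by linarith) ?_) (abs_nonneg _)
    linarith [lt_adaLassoInv hη (θ + a), lt_adaLassoInv hη (θ - a)]
  have hD : D (θ - a) ≤ D (θ + a) := by
    have := adaLassoInv_pos hη (θ - a)
    refine inv_anti₀ (by positivity) (add_le_add_right (div_le_div_of_nonneg_left
      (sq_nonneg η) (by positivity) (pow_le_pow_left₀ this.le hmono 2)) 1)
  have hD₁ : D (θ + a) ≤ 1 := inv_le_one_of_one_le₀ (le_add_of_nonneg_right (by positivity))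
  have key : φ (√n * (adaLassoInv η (θ + a) - θ)) * (1 - D (θ + a))
      ≤ φ (√n * (adaLassoInv η (θ - a) - θ)) * (1 - D (θ - a)) :=
    mul_le_mul hφ (by linarith) (by linarith) (gaussianPDFReal_nonneg 0 1 _)
  rw [(hF θ).deriv]
  nlinarith [Real.sqrt_nonneg n]

lemma symmInfCoverage_le_cover (hn : 0 < n) (hη : 0 < η) (ha : 0 ≤ a) (θ : ℝ) :
    symmInfCoverage n η a ≤ cover n (adaLasso η) a a θ := by
  have hright (θ : ℝ) (hθ : a < θ) :
      symmInfCoverage n η a ≤ cover n (adaLasso η) a a θ := by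
    rw [cover_adaLasso_of_lt hn hη ha ha hθ, ← coverRight_self_self hη.le]
    exact monotoneOn_coverRight hη ha self_mem_Ici hθ.le hθ.le
  rcases lt_or_ge a θ with hθ | hθ
  · exact hright θ hθ
  rcases le_or_gt (-a) θ with hθ' | hθ'
  · rw [cover_adaLasso_of_abs_le hn hη (abs_le.2 ⟨hθ', hθ⟩), symmInfCoverage]
    have h₁ := antitone_adaLassoInv_sub hη (by linarith : θ + a ≤ 2 * a)
    have h₂ := lt_adaLassoInv hη (a - θ)
    simp only [adaLassoInv_two_mul] at h₁
    exact sub_le_sub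
      (strictMono_stdNormCDF.monotone (mul_le_mul_of_nonneg_left (by linarith) (by positivity)))
      (strictMono_stdNormCDF.monotone (mul_le_mul_of_nonneg_left (by linarith) (by positivity)))
  · rw [← neg_neg θ, cover_neg (adaLasso_neg η)]
    exact hright _ (by linarith)

lemma iInf_cover_self (hn : 0 < n) (hη : 0 < η) (ha : 0 ≤ a) :
    ⨅ θ, cover n (adaLasso η) a a θ = symmInfCoverage n η a :=
  le_antisymm ((iInf_cover_le_coverRight hn hη ha ha).trans_eq (coverRight_self_self hη.le))
    (le_ciInf (symmInfCoverage_le_cover hn hη ha))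

lemma coverRight_lt_symmInfCoverage (hn : 0 < n) (hη : 0 < η) (hb : 0 ≤ b) (hba : b < a) :
    coverRight n η a b b < symmInfCoverage n η ((a + b) / 2) := by
  set m := (a + b) / 2
  set S := √(m ^ 2 + η ^ 2)
  have hbm : b < m := by linarith [show m = (a + b) / 2 from rfl]
  have hc : 0 < √(n : ℝ) := by positivity
  have hηS : η ≤ S := Real.le_sqrt_of_sq_le (le_add_of_nonneg_left (sq_nonneg m))
  have hmS : m ≤ S := Real.le_sqrt_of_sq_le (le_add_of_nonneg_right (sq_nonneg η))
  have habs {x : ℝ} (hx₀ : 0 ≤ x) (hxm : x ≤ m) : |√n * (η - x)| ≤ √n * S := by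
    rw [abs_mul, abs_of_pos hc]
    exact mul_le_mul_of_nonneg_left (abs_le.2 ⟨by linarith, by linarith⟩) hc.le
  have key := stdNormCDF_add_sub_lt (habs (by linarith) le_rfl)
    (by rw [← mul_add, sub_add_sub_cancel]; exact habs hb (by linarith))
    (mul_pos hc (by linarith : 0 < m - b))
  rw [coverRight_self hη.le, show a + b = 2 * m by ring, adaLassoInv_two_mul, symmInfCoverage]
  rw [← mul_add, ← mul_add, sub_add_sub_cancel, ← add_sub_assoc, add_comm S] at key
  linarith

lemma iInf_cover_lt_symmInfCoverage (hn : 0 < n) (hη : 0 < η) (ha : 0 ≤ a) (hb : 0 ≤ b)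
    (hab : a ≠ b) :
    ⨅ θ, cover n (adaLasso η) a b θ < symmInfCoverage n η ((a + b) / 2) := by
  wlog hba : b < a generalizing a b
  · rw [iInf_cover_comm (adaLasso_neg η), add_comm]
    exact this hb ha hab.symm ((not_lt.1 hba).lt_of_ne hab)
  exact (iInf_cover_le_coverRight hn hη ha hb).trans_lt
    (coverRight_lt_symmInfCoverage hn hη hb hba)

lemma iInf_cover_le_symmInfCoverage (hn : 0 < n) (hη : 0 < η) (ha : 0 ≤ a) (hb : 0 ≤ b) :
    ⨅ θ, cover n (adaLasso η) a b θ ≤ symmInfCoverage n η ((a + b) / 2) := by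
  rcases eq_or_ne a b with rfl | hab
  · rw [iInf_cover_self hn hη ha, add_self_div_two]
  · exact (iInf_cover_lt_symmInfCoverage hn hη ha hb hab).le

end adaLassoCover

/-- Theorem 1(c): the shortest δ-level interval based on the adaptive LASSO estimator. -/
theorem stmt_8 (n : ℕ) (hn : 1 ≤ n) (η : ℝ) (hη : 0 < η) (δ : ℝ) (hδ0 : 0 < δ)
    (hδ1 : δ < 1) :
    ∃ astar : ℝ, 0 ≤ astar ∧
      -- `astar` solves the equation
      stdNormCDF (Real.sqrt n * (astar - η)) -
        stdNormCDF (-(Real.sqrt n * Real.sqrt (astar ^ 2 + η ^ 2))) = δ ∧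
      -- and it is the unique nonnegative solution
      (∀ a : ℝ, 0 ≤ a →
        stdNormCDF (Real.sqrt n * (a - η)) -
          stdNormCDF (-(Real.sqrt n * Real.sqrt (a ^ 2 + η ^ 2))) = δ →
        a = astar) ∧
      -- it is positive
      0 < astar ∧
      -- the corresponding symmetric interval has infimal coverage probability exactly δ
      (⨅ θ : ℝ, cover n (adaLasso η) astar astar θ) = δ ∧
      -- among all intervals with infimal coverage probability ≥ δ,
      -- the length is minimized at (astar, astar) ...
      (∀ a b : ℝ, 0 ≤ a → 0 ≤ b →
        δ ≤ (⨅ θ : ℝ, cover n (adaLasso η) a b θ) →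
        astar + astar ≤ a + b) ∧
      -- ... and uniquely so
      (∀ a b : ℝ, 0 ≤ a → 0 ≤ b →
        δ ≤ (⨅ θ : ℝ, cover n (adaLasso η) a b θ) →
        a + b = astar + astar → a = astar ∧ b = astar) := by
  simp only [stdNormCDF_sub_eq_symmInfCoverage]
  obtain ⟨a₀, ha₀, hfa₀, huniq⟩ := exists_symmInfCoverage_eq hn hη hδ0 hδ1
  refine ⟨a₀, ha₀.le, hfa₀, huniq, ha₀, (iInf_cover_self hn hη ha₀.le).trans hfa₀,
    fun a b ha hb hδ => ?_, fun a b ha hb hδ hab => ?_⟩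
  · by_contra! hlt
    have := strictMonoOn_symmInfCoverage hn η (by simp only [mem_Ici]; positivity)
      ha₀.le (by linarith : (a + b) / 2 < a₀)
    linarith [iInf_cover_le_symmInfCoverage hn hη ha hb]
  · obtain rfl : a = b := by
      by_contra hne
      have := iInf_cover_lt_symmInfCoverage hn hη ha hb hne
      rw [show (a + b) / 2 = a₀ by linarith, hfa₀] at this
      linarith
    constructor <;> linarith
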